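/- Fix integers 2 ≤ n0 ≤ n. Adding to the graph-encoding constraints (C1)–(C8) the strong-connectivity constraints r(u,v) ≥ A(u,u) + A(v,v) − 1 for all u ≠ v (equivalently: if nodes u and v both exist then u can reach v), the projection (A, r, d, δ) ↦ A becomes a bijection from the restricted feasible set onto the set of adjacency matrices of strongly connected digraphs on [n] with node number n1 satisfying n0 ≤ n1 ≤ n, i.e., digraphs in which every existing node can reach every other existing node. -/
import Mathlib


/-- A directed walk of length `k` from `u` to `v` along the edge relation `E`. -/
def HasWalk {V : Type*} (E : V → V → Prop) (k : ℕ) (u v : V) : Prop :=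
  ∃ f : Fin (k + 1) → V, f 0 = u ∧ f (Fin.last k) = v ∧
    ∀ i : Fin k, E (f i.castSucc) (f i.succ)

/-- `u` reaches `v` : `u = v` or there is a directed path from `u` to `v`. -/
def Reaches {V : Type*} (E : V → V → Prop) (u v : V) : Prop :=
  ∃ k, HasWalk E k u v

/-- Truncated shortest distance: the length of a shortest directed path from `u` to `v`
(`0` if `u = v`), and the sentinel value `n` if `u` does not reach `v`. -/
noncomputable def distG {V : Type*} (E : V → V → Prop) (n : ℕ) (u v : V) : ℕ :=
  letI := Classical.propDecidable (Reaches E u v)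
  if Reaches E u v then sInf {k | HasWalk E k u v} else n

/-- Graph-derived reachability indicator `r(G)`. -/
noncomputable def rG {V : Type*} (E : V → V → Prop) (u v : V) : ℕ :=
  letI := Classical.propDecidable (Reaches E u v)
  if Reaches E u v then 1 else 0

/-- Graph-derived shortest-path membership indicator `δ(G)`. -/
noncomputable def deltaG {V : Type*} [DecidableEq V] (E : V → V → Prop) (n : ℕ)
    (u v w : V) : ℕ :=
  if u = v then (if w = v then 1 else 0)
  else if w = u ∨ w = v then 1
  else
    letI := Classical.propDecidable
      (Reaches E u w ∧ Reaches E w v ∧ distG E n u w + distG E n w v = distG E n u v)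
    if Reaches E u w ∧ Reaches E w v ∧ distG E n u w + distG E n w v = distG E n u v then 1
    else 0

/-- A candidate assignment `(A, r, d, δ)` of the graph encoding on `[n]`. -/
structure Candidate (n : ℕ) where
  A : Fin n → Fin n → ℕ
  r : Fin n → Fin n → ℕ
  d : Fin n → Fin n → ℕ
  delta : Fin n → Fin n → Fin n → ℕ

/-- The graph-encoding constraints (C1)–(C8), together with the variable-domain
requirements (all of `A, r, δ` binary, `d` ranging over `{0,…,n}`). -/
def Feasible (n0 n : ℕ) (c : Candidate n) : Prop :=
  -- variable domains
  (∀ u v, c.A u v = 0 ∨ c.A u v = 1) ∧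
  (∀ u v, c.r u v = 0 ∨ c.r u v = 1) ∧
  (∀ u v, c.d u v ≤ n) ∧
  (∀ u v w, c.delta u v w = 0 ∨ c.delta u v w = 1) ∧
  -- (C1)
  (n0 ≤ ∑ v, c.A v v) ∧
  (∀ v : Fin n, ∀ h : (v : ℕ) + 1 < n, c.A ⟨(v : ℕ) + 1, h⟩ ⟨(v : ℕ) + 1, h⟩ ≤ c.A v v) ∧
  -- (C2)
  (∀ u v, u ≠ v → (c.A u u = 0 ∨ c.A v v = 0) →
    c.A u v = 0 ∧ c.r u v = 0 ∧ c.d u v = n) ∧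
  -- (C3)
  (∀ v, c.r v v = 1 ∧ c.d v v = 0 ∧ c.delta v v v = 1 ∧ ∀ w, w ≠ v → c.delta v v w = 0) ∧
  -- (C4)
  (∀ u v, u ≠ v → (c.A u v = 1 → c.r u v = 1 ∧ c.d u v = 1) ∧ (c.A u v = 0 → 2 ≤ c.d u v)) ∧
  -- (C5)
  (∀ u v, u ≠ v → (c.d u v < n ↔ c.r u v = 1)) ∧
  -- (C6)
  (∀ u v w, u ≠ v → v ≠ w → u ≠ w →
    (c.delta u v w = 1 → c.r u w = 1 ∧ c.r w v = 1) ∧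
    (c.r u w = 1 → c.r w v = 1 → c.r u v = 1)) ∧
  -- (C7)
  (∀ u v, u ≠ v → c.delta u v u = 1 ∧ c.delta u v v = 1 ∧
    ((c.A u v = 1 ∨ c.r u v = 0) → ∑ w, c.delta u v w = 2) ∧
    (c.A u v = 0 → c.r u v = 1 → 2 < ∑ w, c.delta u v w)) ∧
  -- (C8)
  (∀ u v w, u ≠ v → v ≠ w → u ≠ w →
    (c.delta u v w = 1 → c.d u v = c.d u w + c.d w v) ∧
    (c.r u w = 1 → c.r w v = 1 → c.delta u v w = 0 → c.d u v < c.d u w + c.d w v))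

/-- The edge relation of the digraph whose adjacency matrix is `B` :
edge `u → v` exists iff `u ≠ v` and `B u v = 1`. -/
def edgeRel {n : ℕ} (B : Fin n → Fin n → ℕ) : Fin n → Fin n → Prop :=
  fun u v => u ≠ v ∧ B u v = 1

/-- `B` is the adjacency matrix of a digraph on `[n]` with existing node set
`{0,…,n1−1}` for some `n0 ≤ n1 ≤ n`, all edges joining distinct existing nodes. -/
def IsAdjMatrix (n0 n : ℕ) (B : Fin n → Fin n → ℕ) : Prop :=
  (∀ u v, B u v = 0 ∨ B u v = 1) ∧
  (∃ n1, n0 ≤ n1 ∧ n1 ≤ n ∧ ∀ v : Fin n, (B v v = 1 ↔ (v : ℕ) < n1)) ∧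
  (∀ u v, u ≠ v → B u v = 1 → B u u = 1 ∧ B v v = 1)

section Walks
variable {V : Type*} {E : V → V → Prop}

/-- ℕ-indexed walks, easier to splice. -/
def HW (E : V → V → Prop) (k : ℕ) (u v : V) : Prop :=
  ∃ f : ℕ → V, f 0 = u ∧ f k = v ∧ ∀ i < k, E (f i) (f (i + 1))

lemma hw_iff (k : ℕ) (u v : V) : HW E k u v ↔ HasWalk E k u v := by
  constructor
  · rintro ⟨f, h0, hk, he⟩
    exact ⟨fun i => f i, by simpa using h0, by simpa using hk,
      fun i => by simpa using he i i.isLt⟩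
  · rintro ⟨f, h0, hk, he⟩
    refine ⟨fun i => f ⟨min i k, by omega⟩, ?_, ?_, ?_⟩
    · simpa using h0
    · simpa [Fin.last] using hk
    · intro i hi
      have := he ⟨i, hi⟩
      simpa [Fin.castSucc, Fin.succ, Fin.castAdd, Fin.castLE, Nat.min_eq_left hi.le,
        Nat.min_eq_left (Nat.succ_le_of_lt hi)] using this

lemma hw_zero {u v : V} : HW E 0 u v ↔ u = v :=
  ⟨fun ⟨f, h0, hk, _⟩ => h0 ▸ hk ▸ rfl, fun h => ⟨fun _ => u, rfl, h ▸ rfl, by omega⟩⟩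

lemma hw_one {u v : V} : HW E 1 u v ↔ E u v := by
  constructor
  · rintro ⟨f, h0, hk, he⟩
    have := he 0 (by omega)
    rwa [h0, hk] at this
  · intro h
    exact ⟨fun i => if i = 0 then u else v, by simp, by simp, by
      intro i hi
      have : i = 0 := by omega
      simp [this, h]⟩

lemma hw_concat {k m : ℕ} {u w v : V} (h1 : HW E k u w) (h2 : HW E m w v) :
    HW E (k + m) u v := by
  obtain ⟨f, hf0, hfk, hfe⟩ := h1
  obtain ⟨g, hg0, hgm, hge⟩ := h2
  refine ⟨fun i => if i ≤ k then f i else g (i - k), by simp [hf0], ?_, ?_⟩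
  · show (if k + m ≤ k then f (k + m) else g (k + m - k)) = v
    by_cases hmk : k + m ≤ k
    · have hm0 : m = 0 := by omega
      subst hm0
      simp [hfk, ← hg0, hgm]
    · rw [if_neg hmk]
      have h4 : k + m - k = m := by omega
      rw [h4, hgm]
  · intro i hi
    show E (if i ≤ k then f i else g (i - k)) (if i + 1 ≤ k then f (i + 1) else g (i + 1 - k))
    rcases lt_or_ge i k with h | h
    · rw [if_pos h.le, if_pos (by omega : i + 1 ≤ k)]
      exact hfe i h
    · rw [if_neg (by omega : ¬ i + 1 ≤ k)]
      have hval : (if i ≤ k then f i else g (i - k)) = g (i - k) := by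
        rcases Nat.eq_or_lt_of_le h with h' | h'
        · rw [if_pos h'.ge, ← h', Nat.sub_self, hfk, hg0]
        · rw [if_neg (by omega)]
      rw [hval]
      have h3 : i + 1 - k = (i - k) + 1 := by omega
      rw [h3]
      exact hge (i - k) (by omega)

lemma hw_head {k : ℕ} {u v : V} (h : HW E (k + 1) u v) :
    ∃ w, E u w ∧ HW E k w v := by
  obtain ⟨f, h0, hk, he⟩ := h
  refine ⟨f 1, h0 ▸ he 0 (by omega), fun i => f (i + 1), rfl, hk, ?_⟩
  intro i hi
  exact he (i + 1) (by omega)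

lemma reaches_iff (u v : V) : Reaches E u v ↔ ∃ k, HW E k u v := by
  unfold Reaches; simp only [hw_iff]

lemma reaches_refl (u : V) : Reaches E u u :=
  (reaches_iff u u).mpr ⟨0, hw_zero.mpr rfl⟩

lemma reaches_trans {u w v : V} (h1 : Reaches E u w) (h2 : Reaches E w v) :
    Reaches E u v := by
  rw [reaches_iff] at *
  obtain ⟨k, hk⟩ := h1; obtain ⟨m, hm⟩ := h2
  exact ⟨k + m, hw_concat hk hm⟩

lemma hw_small [Fintype V] : ∀ k {u v : V}, HW E k u v →
    ∃ m < Fintype.card V, HW E m u v := by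
  intro k
  induction k using Nat.strong_induction_on with
  | _ k ih =>
    intro u v h
    rcases Nat.lt_or_ge k (Fintype.card V) with hk | hk
    · exact ⟨k, hk, h⟩
    · obtain ⟨f, h0, hke, he⟩ := h
      have hninj : ¬ Function.Injective (fun i : Fin (k+1) => f i) := by
        intro hinj
        have := Fintype.card_le_of_injective _ hinj
        simp at this; omega
      rw [Function.not_injective_iff] at hninj
      obtain ⟨a, b, hab, hne⟩ := hninj
      obtain ⟨i, j, hij, hjk, hfij⟩ : ∃ i j : ℕ, i < j ∧ j ≤ k ∧ f i = f j := by
        rcases lt_trichotomy (a : ℕ) (b : ℕ) with h | h | h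
        · exact ⟨a, b, h, by omega, hab⟩
        · exact absurd (Fin.ext h) hne
        · exact ⟨b, a, h, by omega, hab.symm⟩
      set D := j - i with hD
      have hDk : D ≤ k := by omega
      have hD1 : 1 ≤ D := by omega
      have hg : HW E (k - D) u v := by
        refine ⟨fun t => if t ≤ i then f t else f (t + D), by simp [h0], ?_, ?_⟩
        · by_cases hki : k - D ≤ i
          · have hjk' : j = k := by omega
            have hkd : k - D = i := by omega
            have : f i = v := by rw [hfij, hjk', hke]
            simp [hkd, this]
          · have h1 : k - D + D = k := by omega
            simp [hki, h1, hke]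
        · intro t ht
          show E (if t ≤ i then f t else f (t + D)) (if t + 1 ≤ i then f (t + 1) else f (t + 1 + D))
          by_cases hti : t + 1 ≤ i
          · have h' : t ≤ i := by omega
            simp only [if_pos h', if_pos hti]
            exact he t (by omega)
          · have hval : (if t ≤ i then f t else f (t + D)) = f (t + D) := by
              by_cases h' : t ≤ i
              · have ht' : t = i := by omega
                have : i + D = j := by omega
                simp [h', ht', this, hfij]
              · simp [h']
            rw [hval, if_neg hti]
            have h2 : t + 1 + D = t + D + 1 := by omega
            rw [h2]
            exact he (t + D) (by omega)
      exact ih (k - D) (by omega) hg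

end Walks

section Sound
variable {n0 n : ℕ} {c : Candidate n}

lemma sound_upper (hc : Feasible n0 n c) :
    ∀ k, ∀ u v : Fin n, HW (edgeRel c.A) k u v → c.d u v ≤ k := by
  obtain ⟨hA, hr, hd, hδ, _, _, _, hC3, hC4, hC5, _, _, hC8⟩ := hc
  intro k
  induction k using Nat.strong_induction_on with
  | _ k ih =>
    intro u v hw
    by_cases huv : u = v
    · subst huv
      simp [(hC3 u).2.1]
    · match k, hw with
      | 0, hw => exact absurd (hw_zero.mp hw) huv
      | (k+1), hw =>
        obtain ⟨w, hew, hwv⟩ := hw_head hw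
        obtain ⟨hwu, hAuw⟩ := hew
        have hduw : c.d u w = 1 := ((hC4 u w hwu).1 hAuw).2
        have hruw : c.r u w = 1 := ((hC4 u w hwu).1 hAuw).1
        by_cases hwv' : w = v
        · subst hwv'; omega
        · have hdwv : c.d w v ≤ k := ih k (by omega) w v hwv
          by_cases hr1 : c.d w v < n
          · have hrwv : c.r w v = 1 := (hC5 w v hwv').mp hr1
            rcases hδ u v w with h0 | h1
            · have := (hC8 u v w huv (Ne.symm hwv') hwu).2 hruw hrwv h0
              omega
            · have := (hC8 u v w huv (Ne.symm hwv') hwu).1 h1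
              omega
          · have := hd u v
            omega

lemma sound_lower (hc : Feasible n0 n c) :
    ∀ m, ∀ u v : Fin n, c.d u v = m → c.r u v = 1 → HW (edgeRel c.A) m u v := by
  obtain ⟨hA, hr, hd, hδ, _, _, _, hC3, hC4, hC5, hC6, hC7, hC8⟩ := hc
  intro m
  induction m using Nat.strong_induction_on with
  | _ m ih =>
    intro u v hdm hr1
    by_cases huv : u = v
    · subst huv
      have : c.d u u = 0 := (hC3 u).2.1
      rw [← hdm, this]
      exact hw_zero.mpr rfl
    · rcases hA u v with hA0 | hA1
      · have hd2 : 2 ≤ c.d u v := (hC4 u v huv).2 hA0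
        have hgt := (hC7 u v huv).2.2.2 hA0 hr1
        have hex : ∃ w : Fin n, w ≠ u ∧ w ≠ v ∧ c.delta u v w = 1 := by
          by_contra hno
          push_neg at hno
          have hle : ∀ w : Fin n, c.delta u v w ≤
              (if w = u then 1 else 0) + (if w = v then 1 else 0) := by
            intro w
            by_cases h1 : w = u
            · rw [h1]
              rcases hδ u v u with h | h <;> simp [h, huv]
            · by_cases h2 : w = v
              · rw [h2]
                have hvu : ¬ v = u := fun hh => huv hh.symm
                rcases hδ u v v with h | h <;> simp [h, hvu]
              · simp only [if_neg h1, if_neg h2]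
                have h3 := hno w h1 h2
                rcases hδ u v w with h | h
                · simp [h]
                · exact absurd h h3
          have hsum : ∑ w, c.delta u v w ≤ 2 := by
            calc ∑ w, c.delta u v w
                ≤ ∑ w : Fin n, ((if w = u then 1 else 0) + (if w = v then 1 else 0)) :=
                  Finset.sum_le_sum (fun w _ => hle w)
              _ = 2 := by
                  rw [Finset.sum_add_distrib]
                  simp [Finset.sum_ite_eq']
          omega
        obtain ⟨w, hwu, hwv, hδ1⟩ := hex
        have hrs := (hC6 u v w huv (Ne.symm hwv) (Ne.symm hwu)).1 hδ1
        have hdsum := (hC8 u v w huv (Ne.symm hwv) (Ne.symm hwu)).1 hδ1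
        have hd1 : 1 ≤ c.d u w := by
          rcases hA u w with h | h
          · have := (hC4 u w (Ne.symm hwu)).2 h; omega
          · have := ((hC4 u w (Ne.symm hwu)).1 h).2; omega
        have hd2' : 1 ≤ c.d w v := by
          rcases hA w v with h | h
          · have := (hC4 w v hwv).2 h; omega
          · have := ((hC4 w v hwv).1 h).2; omega
        have hw1 := ih (c.d u w) (by omega) u w rfl hrs.1
        have hw2 := ih (c.d w v) (by omega) w v rfl hrs.2
        rw [← hdm, hdsum]
        exact hw_concat hw1 hw2
      · have : c.d u v = 1 := ((hC4 u v huv).1 hA1).2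
        rw [← hdm, this]
        exact hw_one.mpr ⟨huv, hA1⟩

lemma sound_r_reaches (hc : Feasible n0 n c) {u v : Fin n} (h : c.r u v = 1) :
    Reaches (edgeRel c.A) u v :=
  (reaches_iff u v).mpr ⟨c.d u v, sound_lower hc _ u v rfl h⟩

lemma sound_not_reaches (hc : Feasible n0 n c) {u v : Fin n} (huv : u ≠ v)
    (h : c.r u v = 0) : ¬ Reaches (edgeRel c.A) u v := by
  intro hre
  obtain ⟨k, hk⟩ := (reaches_iff u v).mp hre
  obtain ⟨m, hm, hw⟩ := hw_small k hk
  have hdm : c.d u v ≤ m := sound_upper hc m u v hw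
  have hcard : Fintype.card (Fin n) = n := Fintype.card_fin n
  have hlt : c.d u v < n := by omega
  have := (hc.2.2.2.2.2.2.2.2.2.1 u v huv).mp hlt
  omega

lemma sound_d_eq (hc : Feasible n0 n c) (u v : Fin n) :
    c.d u v = distG (edgeRel c.A) n u v := by
  classical
  by_cases hr1 : c.r u v = 1
  · have hre : Reaches (edgeRel c.A) u v := sound_r_reaches hc hr1
    unfold distG
    rw [if_pos hre]
    apply le_antisymm
    · have hne : {k | HasWalk (edgeRel c.A) k u v}.Nonempty := hre
      have hmem := Nat.sInf_mem hne
      exact sound_upper hc _ u v ((hw_iff _ u v).mpr hmem)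
    · exact Nat.sInf_le ((hw_iff _ u v).mp (sound_lower hc _ u v rfl hr1))
  · have hr0 : c.r u v = 0 := by rcases hc.2.1 u v with h | h <;> omega
    have huv : u ≠ v := by
      rintro rfl
      exact hr1 (hc.2.2.2.2.2.2.2.1 u).1
    unfold distG
    rw [if_neg (sound_not_reaches hc huv hr0)]
    have h1 := hc.2.2.1 u v
    have h2 := (hc.2.2.2.2.2.2.2.2.2.1 u v huv)
    by_contra hne
    have : c.d u v < n := by omega
    have := h2.mp this
    omega

lemma mono_diag (hc : Feasible n0 n c) :
    ∀ m : ℕ, ∀ w v : Fin n, (v : ℕ) = m → (w : ℕ) ≤ (v : ℕ) → c.A v v = 1 → c.A w w = 1 := by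
  obtain ⟨hA, -, -, -, -, hmono, -⟩ := hc
  intro m
  induction m with
  | zero =>
    intro w v hv hwv h1
    have : w = v := Fin.ext (by omega)
    rwa [this]
  | succ k ih =>
    intro w v hv hwv h1
    by_cases hw : (w : ℕ) = (v : ℕ)
    · have : w = v := Fin.ext hw
      rwa [this]
    · have hkn : k < n := by have := v.isLt; omega
      have hk1n : (k : ℕ) + 1 < n := by have := v.isLt; omega
      have hveq : v = ⟨k + 1, hk1n⟩ := Fin.ext (by simpa using hv)
      have hstep : c.A ⟨k + 1, hk1n⟩ ⟨k + 1, hk1n⟩ ≤ c.A ⟨k, hkn⟩ ⟨k, hkn⟩ :=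
        hmono ⟨k, hkn⟩ hk1n
      rw [hveq] at h1
      have h1' : c.A ⟨k, hkn⟩ ⟨k, hkn⟩ = 1 := by
        rcases hA ⟨k, hkn⟩ ⟨k, hkn⟩ with h | h
        · omega
        · exact h
      exact ih w ⟨k, hkn⟩ rfl (by simp; omega) h1'

lemma card_filter_lt {n : ℕ} (m : ℕ) (h : m ≤ n) :
    (Finset.univ.filter fun v : Fin n => (v : ℕ) < m).card = m := by
  have heq : (Finset.univ.filter fun v : Fin n => (v : ℕ) < m)
      = Finset.map (Fin.castLEEmb h) Finset.univ := by
    ext v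
    simp only [Finset.mem_filter, Finset.mem_univ, true_and, Finset.mem_map]
    constructor
    · intro hv
      exact ⟨⟨(v : ℕ), hv⟩, Fin.ext rfl⟩
    · rintro ⟨a, rfl⟩
      simpa using a.isLt
  rw [heq, Finset.card_map, Finset.card_univ, Fintype.card_fin]

lemma exists_n1 (hc : Feasible n0 n c) :
    ∃ n1, n0 ≤ n1 ∧ n1 ≤ n ∧ ∀ v : Fin n, (c.A v v = 1 ↔ (v : ℕ) < n1) := by
  classical
  have hA := hc.1
  have hsum := hc.2.2.2.2.1
  set S := Finset.univ.filter (fun v : Fin n => c.A v v = 1) with hS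
  refine ⟨S.card, ?_, ?_, ?_⟩
  · have hs : ∑ v, c.A v v = S.card := by
      rw [hS, Finset.card_filter]
      apply Finset.sum_congr rfl
      intro v _
      rcases hA v v with h | h <;> simp [h]
    omega
  · calc S.card ≤ Finset.univ.card := Finset.card_filter_le _ _
      _ = n := by simp
  · intro v
    constructor
    · intro hv
      have hle : (v : ℕ) + 1 ≤ S.card := by
        have hmem : ∀ a ∈ Finset.range ((v : ℕ) + 1),
            (fun a : ℕ => if h : a < n then (⟨a, h⟩ : Fin n) else v) a ∈ S := by
          intro a ha
          simp only [Finset.mem_range] at ha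
          have han : a < n := by have := v.isLt; omega
          simp only [dif_pos han, hS, Finset.mem_filter, Finset.mem_univ, true_and]
          exact mono_diag hc (v : ℕ) ⟨a, han⟩ v rfl (by simp; omega) hv
        have hinj : Set.InjOn (fun a : ℕ => if h : a < n then (⟨a, h⟩ : Fin n) else v)
            (Finset.range ((v : ℕ) + 1)) := by
          intro a ha b hb hab
          simp only [Finset.coe_range, Set.mem_Iio] at ha hb
          have han : a < n := by have := v.isLt; omega
          have hbn : b < n := by have := v.isLt; omega
          simp only [dif_pos han, dif_pos hbn, Fin.mk.injEq] at hab
          exact hab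
        have := Finset.card_le_card_of_injOn _ hmem hinj
        simpa using this
      omega
    · intro hv
      by_contra h0
      have hcard : S.card ≤ (v : ℕ) := by
        have hmem : ∀ w ∈ S, (w : ℕ) ∈ Finset.range (v : ℕ) := by
          intro w hw
          simp only [hS, Finset.mem_filter, Finset.mem_univ, true_and] at hw
          simp only [Finset.mem_range]
          by_contra hge
          exact h0 (mono_diag hc (w : ℕ) v w rfl (by omega) hw)
        have hinj : Set.InjOn (fun w : Fin n => (w : ℕ)) S := by
          intro a _ b _ hab
          exact Fin.ext hab
        have := Finset.card_le_card_of_injOn _ hmem hinj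
        simpa using this
      omega

end Sound

section DistLemmas
variable {V : Type*} {E : V → V → Prop} {n : ℕ} {u v w : V}

lemma rG_eq_one_iff : rG E u v = 1 ↔ Reaches E u v := by
  unfold rG; split <;> simp [*]

lemma rG_eq_zero (h : ¬ Reaches E u v) : rG E u v = 0 := by
  unfold rG; rw [if_neg h]

lemma distG_self (n : ℕ) (v : V) : distG E n v v = 0 := by
  unfold distG
  rw [if_pos (reaches_refl v)]
  exact Nat.sInf_eq_zero.mpr (Or.inl ((hw_iff 0 v v).mp (hw_zero.mpr rfl)))

lemma distG_of_not_reaches (h : ¬ Reaches E u v) : distG E n u v = n := by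
  unfold distG; rw [if_neg h]

lemma distG_spec (h : Reaches E u v) : HasWalk E (distG E n u v) u v := by
  unfold distG
  rw [if_pos h]
  exact Nat.sInf_mem (h : ∃ k, k ∈ {k | HasWalk E k u v})

lemma distG_le_of_walk {k : ℕ} (h : HasWalk E k u v) : distG E n u v ≤ k := by
  unfold distG
  rw [if_pos ⟨k, h⟩]
  exact Nat.sInf_le h

lemma distG_lt [Fintype V] (hcard : Fintype.card V ≤ n) (h : Reaches E u v) :
    distG E n u v < n := by
  obtain ⟨k, hk⟩ := (reaches_iff u v).mp h
  obtain ⟨m, hm, hw⟩ := hw_small k hk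
  have := distG_le_of_walk (n := n) ((hw_iff m u v).mp hw)
  omega

lemma distG_le [Fintype V] (hcard : Fintype.card V ≤ n) :
    distG E n u v ≤ n := by
  by_cases h : Reaches E u v
  · exact le_of_lt (distG_lt hcard h)
  · rw [distG_of_not_reaches h]

lemma distG_pos (hn : 1 ≤ n) (huv : u ≠ v) : 1 ≤ distG E n u v := by
  by_cases h : Reaches E u v
  · have hw := distG_spec (n := n) h
    rcases Nat.eq_zero_or_pos (distG E n u v) with h0 | h1
    · rw [h0] at hw
      exact absurd (hw_zero.mp ((hw_iff 0 u v).mpr hw)) huv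
    · exact h1
  · rw [distG_of_not_reaches h]; exact hn

lemma distG_one (huv : u ≠ v) (h : E u v) : distG E n u v = 1 := by
  have hw1 : HasWalk E 1 u v := (hw_iff 1 u v).mp (hw_one.mpr h)
  have hle := distG_le_of_walk (n := n) hw1
  have hw := distG_spec (n := n) ⟨1, hw1⟩
  have h0 : distG E n u v ≠ 0 := by
    intro h0
    rw [h0] at hw
    exact huv (hw_zero.mp ((hw_iff 0 u v).mpr hw))
  omega

lemma distG_two (hn : 2 ≤ n) (huv : u ≠ v) (hne : ¬ E u v) :
    2 ≤ distG E n u v := by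
  by_cases h : Reaches E u v
  · have hw := distG_spec (n := n) h
    rcases Nat.lt_or_ge (distG E n u v) 2 with h2 | h2
    · interval_cases hd : (distG E n u v)
      · exact absurd (hw_zero.mp ((hw_iff 0 u v).mpr hw)) huv
      · exact absurd (hw_one.mp ((hw_iff 1 u v).mpr hw)) hne
    · exact h2
  · rw [distG_of_not_reaches h]; exact hn

lemma distG_triangle (h1 : Reaches E u w) (h2 : Reaches E w v) :
    distG E n u v ≤ distG E n u w + distG E n w v :=
  distG_le_of_walk ((hw_iff _ u v).mp
    (hw_concat ((hw_iff _ u w).mpr (distG_spec h1)) ((hw_iff _ w v).mpr (distG_spec h2))))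

end DistLemmas

section Complete
variable {n : ℕ} {B : Fin n → Fin n → ℕ}

lemma reaches_diag (hedge : ∀ u v : Fin n, u ≠ v → B u v = 1 → B u u = 1 ∧ B v v = 1) :
    ∀ k (u v : Fin n), u ≠ v → HW (edgeRel B) k u v → B u u = 1 ∧ B v v = 1 := by
  intro k
  induction k with
  | zero => exact fun u v huv hw => absurd (hw_zero.mp hw) huv
  | succ k ih =>
    intro u v huv hw
    obtain ⟨w, ⟨hew1, hew2⟩, hwv⟩ := hw_head hw
    have h1 := hedge u w hew1 hew2
    by_cases hwv' : w = v
    · subst hwv'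
      exact ⟨h1.1, h1.2⟩
    · exact ⟨h1.1, (ih w v hwv' hwv).2⟩

lemma complete_feasible {n0 : ℕ} (h2 : 2 ≤ n0) (hn : n0 ≤ n)
    (hB : IsAdjMatrix n0 n B)
    (hSC : ∀ u v : Fin n, u ≠ v → B u u = 1 → B v v = 1 → Reaches (edgeRel B) u v) :
    Feasible n0 n ⟨B, fun u v => rG (edgeRel B) u v, fun u v => distG (edgeRel B) n u v,
      fun u v w => deltaG (edgeRel B) n u v w⟩ := by
  classical
  obtain ⟨hbin, ⟨n1, hn01, hn1n, hdiag⟩, hedge⟩ := hB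
  set E := edgeRel B with hE
  have hn2 : 2 ≤ n := le_trans h2 hn
  have hcard : Fintype.card (Fin n) ≤ n := by simp
  have hreach_iff : ∀ u v : Fin n, u ≠ v → (Reaches E u v ↔ (B u u = 1 ∧ B v v = 1)) := by
    intro u v huv
    constructor
    · intro hre
      obtain ⟨k, hk⟩ := (reaches_iff u v).mp hre
      exact reaches_diag hedge k u v huv hk
    · rintro ⟨ha, hb⟩
      exact hSC u v huv ha hb
  refine ⟨hbin, ?_, ?_, ?_, ?_, ?_, ?_, ?_, ?_, ?_, ?_, ?_, ?_⟩ <;> dsimp only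
  · -- r binary
    intro u v
    unfold rG
    split <;> simp
  · -- d ≤ n
    intro u v
    exact distG_le hcard
  · -- delta binary
    intro u v w
    unfold deltaG
    split_ifs <;> simp
  · -- C1 sum
    have hfs : (Finset.univ.filter fun v : Fin n => (v : ℕ) < n1).card ≤ ∑ v, B v v := by
      rw [Finset.card_filter]
      apply Finset.sum_le_sum
      intro v _
      by_cases h : (v : ℕ) < n1
      · rw [if_pos h, (hdiag v).mpr h]
      · simp [h]
    rw [card_filter_lt n1 hn1n] at hfs
    omega
  · -- C1 mono
    intro v h
    rcases hbin ⟨(v : ℕ) + 1, h⟩ ⟨(v : ℕ) + 1, h⟩ with h0 | h1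
    · omega
    · have h1' : ((⟨(v : ℕ) + 1, h⟩ : Fin n) : ℕ) < n1 := (hdiag _).mp h1
      have h2' : (v : ℕ) < n1 := by simp at h1'; omega
      have := (hdiag v).mpr h2'
      omega
  · -- C2
    intro u v huv hor
    have hA0 : B u v = 0 := by
      rcases hbin u v with h | h
      · exact h
      · have := hedge u v huv h
        omega
    have hnr : ¬ Reaches E u v := by
      intro hre
      have := (hreach_iff u v huv).mp hre
      omega
    exact ⟨hA0, rG_eq_zero hnr, distG_of_not_reaches hnr⟩
  · -- C3
    intro v
    refine ⟨rG_eq_one_iff.mpr (reaches_refl v), distG_self n v, by simp [deltaG], ?_⟩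
    intro w hwv
    simp [deltaG, hwv]
  · -- C4
    intro u v huv
    constructor
    · intro h1
      have he : E u v := ⟨huv, h1⟩
      exact ⟨rG_eq_one_iff.mpr ⟨1, (hw_iff 1 u v).mp (hw_one.mpr he)⟩, distG_one huv he⟩
    · intro h0
      exact distG_two hn2 huv (fun he => by have := he.2; omega)
  · -- C5
    intro u v huv
    constructor
    · intro hlt
      apply rG_eq_one_iff.mpr
      by_contra hnr
      rw [distG_of_not_reaches hnr] at hlt
      omega
    · intro hr1
      exact distG_lt hcard (rG_eq_one_iff.mp hr1)
  · -- C6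
    intro u v w huv hvw huw
    have hwu : ¬ (w = u ∨ w = v) := by
      push_neg
      exact ⟨fun h => huw h.symm, fun h => hvw h.symm⟩
    constructor
    · intro hδ1
      have hcond : Reaches E u w ∧ Reaches E w v ∧
          distG E n u w + distG E n w v = distG E n u v := by
        by_contra hc
        unfold deltaG at hδ1
        rw [if_neg huv, if_neg hwu, if_neg hc] at hδ1
        exact absurd hδ1 (by omega)
      exact ⟨rG_eq_one_iff.mpr hcond.1, rG_eq_one_iff.mpr hcond.2.1⟩
    · intro h1 h2
      exact rG_eq_one_iff.mpr (reaches_trans (rG_eq_one_iff.mp h1) (rG_eq_one_iff.mp h2))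
  · -- C7
    intro u v huv
    refine ⟨by simp [deltaG, huv], by simp [deltaG, huv], ?_, ?_⟩
    · intro hcase
      have hpt : ∀ w : Fin n, deltaG E n u v w =
          (if w = u then 1 else 0) + (if w = v then 1 else 0) := by
        intro w
        by_cases h1 : w = u
        · subst h1
          simp [deltaG, huv]
        · by_cases h2 : w = v
          · subst h2
            simp [deltaG, huv, h1]
          · have hwuv : ¬ (w = u ∨ w = v) := by push_neg; exact ⟨h1, h2⟩
            have hcf : ¬ (Reaches E u w ∧ Reaches E w v ∧
                distG E n u w + distG E n w v = distG E n u v) := by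
              rcases hcase with hA1 | hr0
              · rintro ⟨r1, r2, heq⟩
                have hd1 : distG E n u v = 1 := distG_one huv ⟨huv, hA1⟩
                have hp1 : 1 ≤ distG E n u w := distG_pos (by omega) (fun h => h1 h.symm)
                have hp2 : 1 ≤ distG E n w v := distG_pos (by omega) h2
                omega
              · rintro ⟨r1, r2, heq⟩
                have hruv : Reaches E u v := reaches_trans r1 r2
                have := rG_eq_one_iff.mpr hruv
                omega
            unfold deltaG
            rw [if_neg huv, if_neg hwuv, if_neg hcf, if_neg h1, if_neg h2]
      rw [Finset.sum_congr rfl (fun w _ => hpt w), Finset.sum_add_distrib]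
      simp
    · intro hA0 hr1
      have hre : Reaches E u v := rG_eq_one_iff.mp hr1
      set m := distG E n u v with hm
      have hm2 : 2 ≤ m := distG_two hn2 huv (fun he => by have := he.2; omega)
      have hw' : HW E m u v := (hw_iff m u v).mpr (distG_spec hre)
      obtain ⟨k, hk⟩ : ∃ k, m = k + 1 := ⟨m - 1, by omega⟩
      rw [hk] at hw'
      obtain ⟨w, hew, hwv⟩ := hw_head hw'
      have hwu : w ≠ u := fun h => hew.1 h.symm
      have hwv' : w ≠ v := by
        rintro rfl
        have := hew.2
        omega
      have hruw : Reaches E u w := ⟨1, (hw_iff 1 u w).mp (hw_one.mpr hew)⟩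
      have hrwv : Reaches E w v := ⟨k, (hw_iff k w v).mp hwv⟩
      have hd1 : distG E n u w = 1 := distG_one (fun h => hwu h.symm) hew
      have hdk : distG E n w v ≤ k := distG_le_of_walk ((hw_iff k w v).mp hwv)
      have htri : m ≤ distG E n u w + distG E n w v := distG_triangle hruw hrwv
      have hδw : deltaG E n u v w = 1 := by
        have hwuv : ¬ (w = u ∨ w = v) := by push_neg; exact ⟨hwu, hwv'⟩
        unfold deltaG
        rw [if_neg huv, if_neg hwuv, if_pos ⟨hruw, hrwv, by omega⟩]
      have hsub : ({u, v, w} : Finset (Fin n)) ⊆ Finset.univ := Finset.subset_univ _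
      have hsum3 : ∑ x ∈ ({u, v, w} : Finset (Fin n)), deltaG E n u v x = 3 := by
        have huw' : u ≠ w := fun h => hwu h.symm
        have hvw' : v ≠ w := fun h => hwv' h.symm
        rw [Finset.sum_insert (by simp [huv, huw']),
          Finset.sum_insert (by simp [hvw']), Finset.sum_singleton]
        have hdδu : deltaG E n u v u = 1 := by simp [deltaG, huv]
        have hdδv : deltaG E n u v v = 1 := by simp [deltaG, huv]
        rw [hdδu, hdδv, hδw]
        omega
      have hle : ∑ x ∈ ({u, v, w} : Finset (Fin n)), deltaG E n u v x
          ≤ ∑ x, deltaG E n u v x := Finset.sum_le_sum_of_subset hsub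
      omega
  · -- C8
    intro u v w huv hvw huw
    have hwu : ¬ (w = u ∨ w = v) := by
      push_neg
      exact ⟨fun h => huw h.symm, fun h => hvw h.symm⟩
    constructor
    · intro hδ1
      have hcond : Reaches E u w ∧ Reaches E w v ∧
          distG E n u w + distG E n w v = distG E n u v := by
        by_contra hc
        unfold deltaG at hδ1
        rw [if_neg huv, if_neg hwu, if_neg hc] at hδ1
        exact absurd hδ1 (by omega)
      exact hcond.2.2.symm
    · intro hruw hrwv hδ0
      have r1 := rG_eq_one_iff.mp hruw
      have r2 := rG_eq_one_iff.mp hrwv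
      have htri := distG_triangle (n := n) r1 r2
      have hne : distG E n u w + distG E n w v ≠ distG E n u v := by
        intro heq
        unfold deltaG at hδ0
        rw [if_neg huv, if_neg hwu, if_pos ⟨r1, r2, heq⟩] at hδ0
        exact absurd hδ0 (by omega)
      omega

end Complete

section Final
variable {n0 n : ℕ} {c : Candidate n}

lemma r_eq_of (hc : Feasible n0 n c)
    (hsc : ∀ u v : Fin n, u ≠ v → c.A u u + c.A v v ≤ c.r u v + 1) (u v : Fin n) :
    c.r u v = if u = v then 1 else (if c.A u u = 1 ∧ c.A v v = 1 then 1 else 0) := by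
  by_cases huv : u = v
  · rw [if_pos huv, huv, (hc.2.2.2.2.2.2.2.1 v).1]
  · rw [if_neg huv]
    by_cases hb : c.A u u = 1 ∧ c.A v v = 1
    · rw [if_pos hb]
      have := hsc u v huv
      rcases hc.2.1 u v with h | h <;> omega
    · rw [if_neg hb]
      have hor : c.A u u = 0 ∨ c.A v v = 0 := by
        rcases hc.1 u u with h | h <;> rcases hc.1 v v with h' | h' <;> tauto
      exact (hc.2.2.2.2.2.2.1 u v huv hor).2.1

lemma delta_iff (hc : Feasible n0 n c) {u v w : Fin n} (huv : u ≠ v) (hvw : v ≠ w)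
    (huw : u ≠ w) :
    c.delta u v w = 1 ↔ (c.r u w = 1 ∧ c.r w v = 1 ∧ c.d u v = c.d u w + c.d w v) := by
  constructor
  · intro h1
    have hr := (hc.2.2.2.2.2.2.2.2.2.2.1 u v w huv hvw huw).1 h1
    have hd := (hc.2.2.2.2.2.2.2.2.2.2.2.2 u v w huv hvw huw).1 h1
    exact ⟨hr.1, hr.2, hd⟩
  · rintro ⟨h1, h2, h3⟩
    rcases hc.2.2.2.1 u v w with h0 | h0
    · have := (hc.2.2.2.2.2.2.2.2.2.2.2.2 u v w huv hvw huw).2 h1 h2 h0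
      omega
    · exact h0

end Final

/-- Adding the strong-connectivity constraints
`r(u,v) ≥ A(u,u) + A(v,v) − 1` for all `u ≠ v` (equivalently: if nodes `u` and `v` both
exist then `u` can reach `v`) to the graph-encoding constraints (C1)–(C8), the projection
`(A, r, d, δ) ↦ A` becomes a bijection onto the set of adjacency matrices of strongly
connected digraphs on `[n]` with node number in `[n0, n]`, i.e. digraphs in which every
existing node can reach every other existing node. -/
theorem graph_encoding_bijection_strongly_connected (n0 n : ℕ) (h2 : 2 ≤ n0) (hn : n0 ≤ n) :
    Set.BijOn (fun c : Candidate n => c.A)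
      {c | Feasible n0 n c ∧ ∀ u v : Fin n, u ≠ v → c.A u u + c.A v v ≤ c.r u v + 1}
      {B | IsAdjMatrix n0 n B ∧ ∀ u v : Fin n, u ≠ v → B u u = 1 → B v v = 1 →
        Reaches (edgeRel B) u v} := by
  classical
  refine ⟨?_, ?_, ?_⟩
  · -- MapsTo
    rintro c ⟨hc, hsc⟩
    simp only [Set.mem_setOf_eq]
    have hC2 := hc.2.2.2.2.2.2.1
    refine ⟨⟨hc.1, exists_n1 hc, ?_⟩, ?_⟩
    · intro u v huv h1
      constructor
      · rcases hc.1 u u with h | h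
        · have := (hC2 u v huv (Or.inl h)).1
          omega
        · exact h
      · rcases hc.1 v v with h | h
        · have := (hC2 u v huv (Or.inr h)).1
          omega
        · exact h
    · intro u v huv h1 h1'
      have hr1 : c.r u v = 1 := by
        have := hsc u v huv
        rcases hc.2.1 u v with h | h <;> omega
      exact sound_r_reaches hc hr1
  · -- InjOn
    rintro c1 ⟨hc1, hsc1⟩ c2 ⟨hc2, hsc2⟩ hA
    simp only at hA
    have hrr : c1.r = c2.r := by
      funext u v
      rw [r_eq_of hc1 hsc1 u v, r_eq_of hc2 hsc2 u v, hA]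
    have hdd : c1.d = c2.d := by
      funext u v
      rw [sound_d_eq hc1 u v, sound_d_eq hc2 u v, hA]
    have hδδ : c1.delta = c2.delta := by
      funext u v w
      by_cases huv : u = v
      · subst huv
        by_cases hwv : w = u
        · subst hwv
          rw [(hc1.2.2.2.2.2.2.2.1 w).2.2.1, (hc2.2.2.2.2.2.2.2.1 w).2.2.1]
        · rw [(hc1.2.2.2.2.2.2.2.1 u).2.2.2 w hwv, (hc2.2.2.2.2.2.2.2.1 u).2.2.2 w hwv]
      · by_cases hwu : w = u
        · subst hwu
          rw [(hc1.2.2.2.2.2.2.2.2.2.2.2.1 w v huv).1, (hc2.2.2.2.2.2.2.2.2.2.2.2.1 w v huv).1]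
        · by_cases hwv : w = v
          · subst hwv
            rw [(hc1.2.2.2.2.2.2.2.2.2.2.2.1 u w huv).2.1,
              (hc2.2.2.2.2.2.2.2.2.2.2.2.1 u w huv).2.1]
          · have h1 := delta_iff hc1 huv (fun h => hwv h.symm) (fun h => hwu h.symm)
            have h2 := delta_iff hc2 huv (fun h => hwv h.symm) (fun h => hwu h.symm)
            rw [hrr, hdd] at h1
            rcases hc1.2.2.2.1 u v w with h | h <;> rcases hc2.2.2.2.1 u v w with h' | h'
            · rw [h, h']
            · rw [h, h']
              exact absurd (h1.mpr (h2.mp h')) (by omega)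
            · rw [h, h']
              exact absurd (h2.mpr (h1.mp h)) (by omega)
            · rw [h, h']
    obtain ⟨A1, r1, d1, δ1⟩ := c1
    obtain ⟨A2, r2, d2, δ2⟩ := c2
    simp only [Candidate.mk.injEq]
    exact ⟨hA, hrr, hdd, hδδ⟩
  · -- SurjOn
    rintro B ⟨hB, hsc⟩
    refine ⟨⟨B, fun u v => rG (edgeRel B) u v, fun u v => distG (edgeRel B) n u v,
      fun u v w => deltaG (edgeRel B) n u v w⟩, ⟨complete_feasible h2 hn hB hsc, ?_⟩, rfl⟩
    intro u v huv
    dsimp only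
    by_cases h1 : B u u = 1 ∧ B v v = 1
    · have := rG_eq_one_iff.mpr (hsc u v huv h1.1 h1.2)
      omega
    · have hb1 := hB.1 u u
      have hb2 := hB.1 v v
      push_neg at h1
      rcases hb1 with h | h <;> rcases hb2 with h' | h' <;> omega
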